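/- If ρ ∈ M₃(ℂ) is positive semidefinite and Trace(ρ·𝓛(x)) = 0 for all x ∈ M₃(ℂ), then ρ·e₃ = 0, where e₃ is the third standard basis vector of ℂ³; hence every invariant state of the semigroup generated by 𝓛 is supported on span{e₁, e₂} and there is no faithful (positive definite) invariant state. -/

import Mathlib

open Matrix
open scoped ComplexOrder

noncomputable section

/-- The standard matrix units `E i j` of `M₃(ℂ)` (with indices `0,1,2` for `1,2,3`). -/
def E (i j : Fin 3) : Matrix (Fin 3) (Fin 3) ℂ := Matrix.single i j 1

/-- `G = (−(γ₁+γ₂)/2 + iκ)•E₃₃`. -/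
def G (γ₁ γ₂ κ : ℝ) : Matrix (Fin 3) (Fin 3) ℂ :=
  ((-(γ₁ + γ₂) / 2 : ℂ) + Complex.I * (κ : ℂ)) • E 2 2

/-- `L₁ = √γ₁•E₁₃`. -/
def L₁ (γ₁ : ℝ) : Matrix (Fin 3) (Fin 3) ℂ := (Real.sqrt γ₁ : ℂ) • E 0 2

/-- `L₂ = √γ₂•E₂₃`. -/
def L₂ (γ₂ : ℝ) : Matrix (Fin 3) (Fin 3) ℂ := (Real.sqrt γ₂ : ℂ) • E 1 2

/-- The generator `𝓛(x) = Gᴴx + L₁ᴴxL₁ + L₂ᴴxL₂ + xG` of the generic QMS. -/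
def gen (γ₁ γ₂ κ : ℝ) (x : Matrix (Fin 3) (Fin 3) ℂ) : Matrix (Fin 3) (Fin 3) ℂ :=
  (G γ₁ γ₂ κ)ᴴ * x + (L₁ γ₁)ᴴ * x * L₁ γ₁ + (L₂ γ₂)ᴴ * x * L₂ γ₂ + x * G γ₁ γ₂ κ

/-!
Only the jump term `L₁ᴴ E₁₁ L₁ = γ₁ E₃₃` of `𝓛(E₁₁)` survives, so invariance tested against `E₁₁`
forces `ρ₃₃ = 0`; a positive semidefinite matrix with a vanishing diagonal entry annihilates the
corresponding basis vector, and a positive definite one has no vanishing diagonal entry.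
-/

theorem Matrix.PosSemidef.mulVec_single_eq_zero_of_diag_eq_zero {𝕜 n : Type*} [RCLike 𝕜]
    [Fintype n] [DecidableEq n] {A : Matrix n n 𝕜} (hA : A.PosSemidef) {i : n}
    (hi : A i i = 0) : A *ᵥ Pi.single i 1 = 0 := by
  rw [← hA.dotProduct_mulVec_zero_iff]
  simp [hi]

theorem gen_E_zero_zero {γ₁ : ℝ} (hγ₁ : 0 ≤ γ₁) (γ₂ κ : ℝ) :
    gen γ₁ γ₂ κ (E 0 0) = (γ₁ : ℂ) • E 2 2 := by
  simp [gen, G, L₁, L₂, E, ← Complex.ofReal_mul, Real.mul_self_sqrt hγ₁]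

theorem invariant_states_not_faithful_general (γ₁ γ₂ κ : ℝ) (hγ₁ : 0 < γ₁)
    (ρ : Matrix (Fin 3) (Fin 3) ℂ) (hρ : ρ.PosSemidef)
    (hinv : ∀ x : Matrix (Fin 3) (Fin 3) ℂ, (ρ * gen γ₁ γ₂ κ x).trace = 0) :
    ρ *ᵥ (Pi.single (2 : Fin 3) (1 : ℂ)) = 0 ∧ ¬ ρ.PosDef := by
  have hρ₂₂ : ρ 2 2 = 0 := by
    have h := hinv (E 0 0)
    rw [gen_E_zero_zero hγ₁.le, E, mul_smul_comm, trace_smul, trace_mul_single] at h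
    simpa [hγ₁.ne'] using h
  exact ⟨hρ.mulVec_single_eq_zero_of_diag_eq_zero hρ₂₂, fun hpd ↦ hpd.diag_pos.ne' hρ₂₂⟩

theorem invariant_states_not_faithful (γ₁ γ₂ κ : ℝ) (hγ₁ : 0 < γ₁) (hγ₂ : 0 < γ₂)
    (ρ : Matrix (Fin 3) (Fin 3) ℂ) (hρ : ρ.PosSemidef)
    (hinv : ∀ x : Matrix (Fin 3) (Fin 3) ℂ, (ρ * gen γ₁ γ₂ κ x).trace = 0) :
    ρ *ᵥ (Pi.single (2 : Fin 3) (1 : ℂ)) = 0 ∧ ¬ ρ.PosDef :=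
  invariant_states_not_faithful_general γ₁ γ₂ κ hγ₁ ρ hρ hinv

end
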